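/- arXiv:2507.20932 — 3 statements merged into one kernel-verified Lean document; each statement's English description precedes it below -/
import Mathlib

section
/- For a distributor H : C ⇸ D between small categories, H is flat if and only if the cocontinuous functor lext_H : Psh(C) → Psh(D), defined by the coend lext_H(X)(d) = ∫^{c} H(d,c) × X(c), preserves finite limits. -/
open CategoryTheory CategoryTheory.Limits Opposite

universe u

namespace DistPaper

variable {B C D : Type u} [SmallCategory B] [SmallCategory C] [SmallCategory D]

/-- A distributor `H : C ⇸ D` is a functor `Dᵒᵖ × C ⥤ Type u`. -/
abbrev Dist (C D : Type u) [SmallCategory C] [SmallCategory D] : Type (u + 1) :=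
  Dᵒᵖ × C ⥤ Type u

/-- Action of a distributor on a pair of morphisms:
`hmap H v u : H(d, c) → H(d', c')` for `v : d' ⟶ d` and `u : c ⟶ c'`. -/
def hmap (H : Dist C D) {d d' : D} {c c' : C} (v : d' ⟶ d) (u : c ⟶ c') :
    H.obj (op d, c) → H.obj (op d', c') :=
  H.map ((v.op, u) : (op d, c) ⟶ (op d', c'))

lemma hmap_hmap (H : Dist C D) {d d' d'' : D} {c c' c'' : C} (v : d' ⟶ d) (v' : d'' ⟶ d')
    (u : c ⟶ c') (u' : c' ⟶ c'') (x : H.obj (op d, c)) :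
    hmap H v' u' (hmap H v u x) = hmap H (v' ≫ v) (u ≫ u') x := by
  dsimp [hmap]
  rw [← FunctorToTypes.map_comp_apply]
  congr 1

lemma hmap_id (H : Dist C D) {d : D} {c : C} (x : H.obj (op d, c)) :
    hmap H (𝟙 d) (𝟙 c) x = x := by
  exact FunctorToTypes.map_id_apply H x

/-- The classifying functor `Ĥ : C ⥤ Psh(D)`, `c ↦ H(-, c)`. -/
def classify (H : Dist C D) : C ⥤ Dᵒᵖ ⥤ Type u :=
  Functor.curry.obj (CategoryTheory.Prod.swap C Dᵒᵖ ⋙ H)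

/-- The distributor associated to a functor `C ⥤ Psh(D)`. -/
def distOfFunctor (G : C ⥤ Dᵒᵖ ⥤ Type u) : Dist C D :=
  CategoryTheory.Prod.swap Dᵒᵖ C ⋙ Functor.uncurry.obj G

/-- A distributor is flat when all its categories of elements `d ↓ H` are cofiltered. -/
def DistFlat (H : Dist C D) : Prop :=
  ∀ d : D, IsCofiltered ((Functor.curry.obj H).obj (op d)).Elements

/-- The cocontinuous extension `lext_H : Psh(C) ⥤ Psh(D)` of a distributor, obtained as
the left Kan extension of the classifying functor along the Yoneda embedding; pointwise
it is given by the coend `lext_H(X)(d) = ∫^c H(d,c) × X(c)`. -/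
noncomputable def lext (H : Dist C D) : (Cᵒᵖ ⥤ Type u) ⥤ Dᵒᵖ ⥤ Type u :=
  yoneda.leftKanExtension (classify H)

/-- The sieve `x^* H[S]` on `d` obtained from a sieve `S` on `c` and a heteromorphism
`x ∈ H(d, c)`. -/
def pullDist (H : Dist C D) {d : D} {c : C} (x : H.obj (op d, c)) (S : Sieve c) :
    Sieve d where
  arrows d' v := ∃ (c' : C) (u : c' ⟶ c) (x' : H.obj (op d', c')),
    S u ∧ hmap H v (𝟙 c) x = hmap H (𝟙 d') u x'
  downward_closed := by
    rintro d' d'' v ⟨c', u, x', hu, hx⟩ w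
    refine ⟨c', u, hmap H w (𝟙 c') x', hu, ?_⟩
    calc hmap H (w ≫ v) (𝟙 c) x
        = hmap H w (𝟙 c) (hmap H v (𝟙 c) x) := by rw [hmap_hmap]; simp
      _ = hmap H w (𝟙 c) (hmap H (𝟙 d') u x') := by rw [hx]
      _ = hmap H (w ≫ 𝟙 d') (u ≫ 𝟙 c) x' := by rw [hmap_hmap]
      _ = hmap H (𝟙 d'' ≫ w) (𝟙 c' ≫ u) x' := by simp
      _ = hmap H (𝟙 d'') u (hmap H w (𝟙 c') x') := by rw [hmap_hmap]

/-- A distributor is cover-distributing from `J` to `K` if sieves of the form `x^* H[S]`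
with `S` a `J`-covering sieve are `K`-covering. -/
def CoverDistributing (J : GrothendieckTopology C) (K : GrothendieckTopology D)
    (H : Dist C D) : Prop :=
  ∀ ⦃d : D⦄ ⦃c : C⦄ (x : H.obj (op d, c)) (S : Sieve c), S ∈ J c → pullDist H x S ∈ K d

section flatSieves

variable (H : Dist C D)

/-- The sieve of condition (1) of `K`-flatness. -/
def flatSieve₁ (d : D) : Sieve d where
  arrows d' _ := ∃ c : C, Nonempty (H.obj (op d', c))
  downward_closed := by
    rintro d' d'' v ⟨c, ⟨x⟩⟩ w
    exact ⟨c, ⟨hmap H w (𝟙 c) x⟩⟩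

/-- The sieve of condition (2) of `K`-flatness. -/
def flatSieve₂ {d : D} {c c' : C} (x : H.obj (op d, c)) (x' : H.obj (op d, c')) :
    Sieve d where
  arrows d' v := ∃ (c'' : C) (u : c'' ⟶ c) (u' : c'' ⟶ c') (x'' : H.obj (op d', c'')),
    hmap H (𝟙 d') u x'' = hmap H v (𝟙 c) x ∧ hmap H (𝟙 d') u' x'' = hmap H v (𝟙 c') x'
  downward_closed := by
    rintro d' d'' v ⟨c'', u, u', x'', h1, h2⟩ w
    refine ⟨c'', u, u', hmap H w (𝟙 c'') x'', ?_, ?_⟩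
    · calc hmap H (𝟙 d'') u (hmap H w (𝟙 c'') x'')
          = hmap H (𝟙 d'' ≫ w) (𝟙 c'' ≫ u) x'' := by rw [hmap_hmap]
        _ = hmap H (w ≫ 𝟙 d') (u ≫ 𝟙 c) x'' := by simp
        _ = hmap H w (𝟙 c) (hmap H (𝟙 d') u x'') := by rw [hmap_hmap]
        _ = hmap H w (𝟙 c) (hmap H v (𝟙 c) x) := by rw [h1]
        _ = hmap H (w ≫ v) (𝟙 c) x := by rw [hmap_hmap]; simp
    · calc hmap H (𝟙 d'') u' (hmap H w (𝟙 c'') x'')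
          = hmap H (𝟙 d'' ≫ w) (𝟙 c'' ≫ u') x'' := by rw [hmap_hmap]
        _ = hmap H (w ≫ 𝟙 d') (u' ≫ 𝟙 c') x'' := by simp
        _ = hmap H w (𝟙 c') (hmap H (𝟙 d') u' x'') := by rw [hmap_hmap]
        _ = hmap H w (𝟙 c') (hmap H v (𝟙 c') x') := by rw [h2]
        _ = hmap H (w ≫ v) (𝟙 c') x' := by rw [hmap_hmap]; simp

/-- The sieve of condition (3) of `K`-flatness. -/
def flatSieve₃ {d : D} {c c' : C} (u u' : c' ⟶ c) (x : H.obj (op d, c')) :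
    Sieve d where
  arrows d' v := ∃ (c'' : C) (w : c'' ⟶ c') (x' : H.obj (op d', c'')),
    w ≫ u = w ≫ u' ∧ hmap H v (𝟙 c') x = hmap H (𝟙 d') w x'
  downward_closed := by
    rintro d' d'' v ⟨c'', w, x', hw, hx⟩ t
    refine ⟨c'', w, hmap H t (𝟙 c'') x', hw, ?_⟩
    calc hmap H (t ≫ v) (𝟙 c') x
        = hmap H t (𝟙 c') (hmap H v (𝟙 c') x) := by rw [hmap_hmap]; simp
      _ = hmap H t (𝟙 c') (hmap H (𝟙 d') w x') := by rw [hx]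
      _ = hmap H (t ≫ 𝟙 d') (w ≫ 𝟙 c') x' := by rw [hmap_hmap]
      _ = hmap H (𝟙 d'' ≫ t) (𝟙 c'' ≫ w) x' := by simp
      _ = hmap H (𝟙 d'') w (hmap H t (𝟙 c'') x') := by rw [hmap_hmap]

end flatSieves

/-- `K`-flatness of a distributor `H : C ⇸ (D, K)`. -/
structure KFlat (K : GrothendieckTopology D) (H : Dist C D) : Prop where
  nonempty : ∀ d : D, flatSieve₁ H d ∈ K d
  spans : ∀ ⦃d : D⦄ ⦃c c' : C⦄ (x : H.obj (op d, c)) (x' : H.obj (op d, c')),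
    flatSieve₂ H x x' ∈ K d
  equalizes : ∀ ⦃d : D⦄ ⦃c c' : C⦄ (u u' : c' ⟶ c) (x : H.obj (op d, c')),
    hmap H (𝟙 d) u x = hmap H (𝟙 d) u' x → flatSieve₃ H u u' x ∈ K d


section YonedaExt

noncomputable def uniqueExtAlongYoneda {C : Type u} [SmallCategory C] {ℰ : Type (u + 1)}
    [Category.{u} ℰ] [HasColimitsOfSize.{u, u} ℰ] (A : C ⥤ ℰ) (L : (Cᵒᵖ ⥤ Type u) ⥤ ℰ)
    (e : A ≅ yoneda ⋙ L) [PreservesColimitsOfSize.{u, u} L] :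
    L ≅ yoneda.leftKanExtension A := by
  let e' : A ≅ uliftYoneda.{u} ⋙ L :=
    e ≪≫ Functor.isoWhiskerRight uliftYonedaIsoYoneda.{u}.symm L
  have h1 := Presheaf.isLeftKanExtension_of_preservesColimits L e'
  have hU := Functor.isUniversalOfIsLeftKanExtension L e'.hom
  have hU' := (IsInitial.isInitialIffObj
    (Functor.leftExtensionEquivalenceOfIso₁ uliftYonedaIsoYoneda.{u} A).functor _) hU
  have h2 : Functor.IsLeftKanExtension
      ((Functor.leftExtensionEquivalenceOfIso₁ uliftYonedaIsoYoneda.{u} A).functor.obj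
        (Functor.LeftExtension.mk L e'.hom)).right
      ((Functor.leftExtensionEquivalenceOfIso₁ uliftYonedaIsoYoneda.{u} A).functor.obj
        (Functor.LeftExtension.mk L e'.hom)).hom := ⟨⟨hU'⟩⟩
  exact Functor.leftKanExtensionUnique _
    ((Functor.leftExtensionEquivalenceOfIso₁ uliftYonedaIsoYoneda.{u} A).functor.obj
        (Functor.LeftExtension.mk L e'.hom)).hom _ (yoneda.leftKanExtensionUnit A)

lemma yoneda_lke_facts {C : Type u} [SmallCategory C] {ℰ : Type (u + 1)}
    [Category.{u} ℰ] [HasColimitsOfSize.{u, u} ℰ] (A : C ⥤ ℰ) :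
    PreservesColimitsOfSize.{u, u} (yoneda.leftKanExtension A) ∧
      IsIso (yoneda.leftKanExtensionUnit A) := by
  have hU := Functor.isUniversalOfIsLeftKanExtension _ (yoneda.leftKanExtensionUnit A)
  have hU' := (IsInitial.isInitialIffObj
    (Functor.leftExtensionEquivalenceOfIso₁ uliftYonedaIsoYoneda.{u} A).inverse _) hU
  have h2 : Functor.IsLeftKanExtension (yoneda.leftKanExtension A)
      (yoneda.leftKanExtensionUnit A ≫
        Functor.whiskerRight uliftYonedaIsoYoneda.{u}.inv (yoneda.leftKanExtension A)) :=
    ⟨⟨hU'⟩⟩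
  refine ⟨Presheaf.preservesColimitsOfSize_of_isLeftKanExtension _
    (yoneda.leftKanExtensionUnit A ≫
        Functor.whiskerRight uliftYonedaIsoYoneda.{u}.inv (yoneda.leftKanExtension A)), ?_⟩
  have h3 := Presheaf.isIso_of_isLeftKanExtension _
    (yoneda.leftKanExtensionUnit A ≫
        Functor.whiskerRight uliftYonedaIsoYoneda.{u}.inv (yoneda.leftKanExtension A))
  have h4 : yoneda.leftKanExtensionUnit A = (yoneda.leftKanExtensionUnit A ≫
        Functor.whiskerRight uliftYonedaIsoYoneda.{u}.inv (yoneda.leftKanExtension A)) ≫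
        Functor.whiskerRight uliftYonedaIsoYoneda.{u}.hom (yoneda.leftKanExtension A) := by
    rw [Category.assoc, ← Functor.whiskerRight_comp]
    simp
  rw [h4]
  infer_instance

lemma preservesColimits_yoneda_lke {C : Type u} [SmallCategory C] {ℰ : Type (u + 1)}
    [Category.{u} ℰ] [HasColimitsOfSize.{u, u} ℰ] (A : C ⥤ ℰ) :
    PreservesColimitsOfSize.{u, u} (yoneda.leftKanExtension A) :=
  (yoneda_lke_facts A).1

end YonedaExt

section CoYoneda
variable {C : Type u} [SmallCategory C] (F : C ⥤ Type u)

noncomputable def lanF : (Cᵒᵖ ⥤ Type u) ⥤ Type u :=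
  (Functor.whiskeringLeft F.Elementsᵒᵖ Cᵒᵖ (Type u)).obj (CategoryOfElements.π F).op ⋙ colim

abbrev lanDiag (X : Cᵒᵖ ⥤ Type u) : F.Elementsᵒᵖ ⥤ Type u :=
  (CategoryOfElements.π F).op ⋙ X

lemma lanF_map {X Y : Cᵒᵖ ⥤ Type u} (f : X ⟶ Y) (e : F.Elementsᵒᵖ)
    (s : X.obj (op e.unop.1)) :
    (lanF F).map f (colimit.ι (lanDiag F X) e s) =
      colimit.ι (lanDiag F Y) e (f.app (op e.unop.1) s) := by
  have := colimit.ι_map (F := lanDiag F X)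
    (G := lanDiag F Y) (Functor.whiskerLeft (CategoryOfElements.π F).op f) e
  exact types_congr_hom this s

lemma lanF_key {c : C} (e : F.Elements) (u : e.1 ⟶ c) :
    colimit.ι (lanDiag F (yoneda.obj c)) (op e) u =
      colimit.ι (lanDiag F (yoneda.obj c)) (op (F.elementsMk c (F.map u e.2))) (𝟙 c) := by
  let m : e ⟶ F.elementsMk c (F.map u e.2) := ⟨u, rfl⟩
  have h := types_congr_hom (colimit.w (lanDiag F (yoneda.obj c)) m.op) (𝟙 c)
  dsimp [CategoryOfElements.π] at h
  change colimit.ι (lanDiag F (yoneda.obj c)) (op e) (u ≫ 𝟙 c) = _ at h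
  exact (congrArg (fun t : e.1 ⟶ c => colimit.ι (lanDiag F (yoneda.obj c)) (op e) t)
    (Category.comp_id u).symm).trans h

def lanCocone (c : C) : Cocone (lanDiag F (yoneda.obj c)) where
  pt := F.obj c
  ι :=
    { app := fun e => TypeCat.ofHom (fun (u : e.unop.1 ⟶ c) => F.map u e.unop.2)
      naturality := by
        rintro e e' m
        ext (u : e.unop.1 ⟶ c)
        have h := m.unop.2
        dsimp [CategoryOfElements.π]
        rw [FunctorToTypes.map_comp_apply, h] }

noncomputable def lanDesc (c : C) : (lanF F).obj (yoneda.obj c) ⟶ F.obj c :=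
  colimit.desc (lanDiag F (yoneda.obj c)) (lanCocone F c)

lemma lanDesc_ι {c : C} (e : F.Elementsᵒᵖ) (u : e.unop.1 ⟶ c) :
    lanDesc F c (colimit.ι (lanDiag F (yoneda.obj c)) e u) = F.map u e.unop.2 :=
  types_congr_hom (colimit.ι_desc (lanCocone F c) e) u

noncomputable def coYonedaIso : F ≅ yoneda ⋙ lanF F :=
  NatIso.ofComponents
    (fun c => Equiv.toIso
      { toFun := fun x => colimit.ι (lanDiag F (yoneda.obj c)) (op (F.elementsMk c x)) (𝟙 c)
        invFun := lanDesc F c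
        left_inv := fun x => by
          rw [lanDesc_ι]; simp
        right_inv := fun t => by
          obtain ⟨e, u, rfl⟩ :=
            Types.jointly_surjective' (F := lanDiag F (yoneda.obj c)) t
          exact (congrArg (fun x => colimit.ι (lanDiag F (yoneda.obj c)) (op (F.elementsMk c x)) (𝟙 c))
            (lanDesc_ι F e u)).trans (lanF_key F e.unop u).symm })
    (by
      intro c c' f
      ext x
      dsimp
      refine Eq.trans ?_ (lanF_map F (yoneda.map f) (op (F.elementsMk c x)) (𝟙 c)).symm
      have : (yoneda.map f).app (op c) (𝟙 c) = f := by simp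
      rw [this]
      exact (lanF_key F (F.elementsMk c x) f).symm)

lemma coYonedaIso_hom_app (c : C) (x : F.obj c) :
    (coYonedaIso F).hom.app c x =
      colimit.ι (lanDiag F (yoneda.obj c)) (op (F.elementsMk c x)) (𝟙 c) := rfl

lemma lanDesc_coYoneda (c : C) (x : F.obj c) :
    lanDesc F c ((coYonedaIso F).hom.app c x) = x := by
  rw [coYonedaIso_hom_app, lanDesc_ι]; simp

end CoYoneda

section Flatness
variable {C : Type u} [SmallCategory C] (F : C ⥤ Type u)

noncomputable instance : PreservesColimitsOfSize.{u, u} (lanF F) := by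
  unfold lanF; infer_instance

noncomputable def lanFIso : lanF F ≅ yoneda.leftKanExtension F :=
  uniqueExtAlongYoneda F (lanF F) (coYonedaIso F)

lemma preservesFiniteLimits_lanF [IsCofiltered F.Elements] :
    PreservesFiniteLimits (lanF F) := by
  have : IsFiltered F.Elementsᵒᵖ := inferInstance
  have h1 : PreservesFiniteLimits
      ((Functor.whiskeringLeft F.Elementsᵒᵖ Cᵒᵖ (Type u)).obj (CategoryOfElements.π F).op) :=
    PreservesLimitsOfSize.preservesFiniteLimits.{0, 0} _
  have h2 : PreservesFiniteLimits (colim : (F.Elementsᵒᵖ ⥤ Type u) ⥤ Type u) :=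
    inferInstance
  exact comp_preservesFiniteLimits _ _

lemma isCofiltered_elements_of_preservesFiniteLimits
    [PreservesFiniteLimits (lanF F)] : IsCofiltered F.Elements := by
  -- nonempty
  have hne : Nonempty F.Elements := by
    let t : (lanF F).obj (⊤_ (Cᵒᵖ ⥤ Type u)) :=
      (PreservesTerminal.iso (lanF F)).inv (Types.terminalIso.inv PUnit.unit)
    obtain ⟨e, _, -⟩ := Types.jointly_surjective' (F := lanDiag F (⊤_ (Cᵒᵖ ⥤ Type u))) t
    exact ⟨e.unop⟩
  have cobjs : ∀ (e₁ e₂ : F.Elements), ∃ (e : F.Elements) (_ : e ⟶ e₁) (_ : e ⟶ e₂), True := by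
    intro e₁ e₂
    set y₁ := yoneda.obj e₁.1 with hy₁
    set y₂ := yoneda.obj e₂.1 with hy₂
    let q : (lanF F).obj y₁ ⨯ (lanF F).obj y₂ :=
      (Types.binaryProductIso _ _).inv
        ((coYonedaIso F).hom.app e₁.1 e₁.2, (coYonedaIso F).hom.app e₂.1 e₂.2)
    let p : (lanF F).obj (y₁ ⨯ y₂) := inv (prodComparison (lanF F) y₁ y₂) q
    have hp : prodComparison (lanF F) y₁ y₂ p = q :=
      types_congr_hom (IsIso.inv_hom_id (prodComparison (lanF F) y₁ y₂)) q
    have h1 : (lanF F).map prod.fst p = (coYonedaIso F).hom.app e₁.1 e₁.2 := by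
      have e1 := types_congr_hom (prodComparison_fst (lanF F) y₁ y₂) p
      have e2 := types_congr_hom (Types.binaryProductIso_inv_comp_fst
        ((lanF F).obj y₁) ((lanF F).obj y₂))
        ((coYonedaIso F).hom.app e₁.1 e₁.2, (coYonedaIso F).hom.app e₂.1 e₂.2)
      simp only [types_comp_apply] at e1 e2
      rw [← e1, hp]
      exact e2
    have h2 : (lanF F).map prod.snd p = (coYonedaIso F).hom.app e₂.1 e₂.2 := by
      have e1 := types_congr_hom (prodComparison_snd (lanF F) y₁ y₂) p
      have e2 := types_congr_hom (Types.binaryProductIso_inv_comp_snd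
        ((lanF F).obj y₁) ((lanF F).obj y₂))
        ((coYonedaIso F).hom.app e₁.1 e₁.2, (coYonedaIso F).hom.app e₂.1 e₂.2)
      simp only [types_comp_apply] at e1 e2
      rw [← e1, hp]
      exact e2
    obtain ⟨e, s, hs⟩ := Types.jointly_surjective' (F := lanDiag F (y₁ ⨯ y₂)) p
    let u₁ : e.unop.1 ⟶ e₁.1 := (prod.fst : y₁ ⨯ y₂ ⟶ y₁).app (op e.unop.1) s
    let u₂ : e.unop.1 ⟶ e₂.1 := (prod.snd : y₁ ⨯ y₂ ⟶ y₂).app (op e.unop.1) s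
    have m1 : colimit.ι (lanDiag F y₁) e u₁ = (coYonedaIso F).hom.app e₁.1 e₁.2 := by
      rw [← h1, ← hs]; exact (lanF_map F _ e s).symm
    have m2 : colimit.ι (lanDiag F y₂) e u₂ = (coYonedaIso F).hom.app e₂.1 e₂.2 := by
      rw [← h2, ← hs]; exact (lanF_map F _ e s).symm
    have hf : F.map u₁ e.unop.2 = e₁.2 := by
      have := congrArg (lanDesc F e₁.1) m1
      rwa [lanDesc_ι, lanDesc_coYoneda] at this
    have hg : F.map u₂ e.unop.2 = e₂.2 := by
      have := congrArg (lanDesc F e₂.1) m2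
      rwa [lanDesc_ι, lanDesc_coYoneda] at this
    exact ⟨e.unop, ⟨u₁, hf⟩, ⟨u₂, hg⟩, trivial⟩
  have cmaps : ∀ ⦃e e₁ : F.Elements⦄ (f g : e ⟶ e₁),
      ∃ (e₀ : F.Elements) (h : e₀ ⟶ e), h ≫ f = h ≫ g := by
    intro e e₁ f g
    set yu := yoneda.map f.val with hyu
    set yv := yoneda.map g.val with hyv
    have hEq : (lanF F).map yu ((coYonedaIso F).hom.app e.1 e.2) =
        (lanF F).map yv ((coYonedaIso F).hom.app e.1 e.2) := by
      have nf := types_congr_hom ((coYonedaIso F).hom.naturality f.val) e.2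
      have ng := types_congr_hom ((coYonedaIso F).hom.naturality g.val) e.2
      simp only [types_comp_apply, Functor.comp_map] at nf ng
      rw [← nf, ← ng, f.2, g.2]
    obtain ⟨t, ht, -⟩ := Types.unique_of_type_equalizer _ _
      (isLimitOfHasEqualizerOfPreservesLimit (lanF F) yu yv)
      ((coYonedaIso F).hom.app e.1 e.2) hEq
    obtain ⟨e₀, s, hs⟩ :=
      Types.jointly_surjective' (F := lanDiag F (equalizer yu yv)) t
    let w : e₀.unop.1 ⟶ e.1 := (equalizer.ι yu yv).app (op e₀.unop.1) s
    have hw : w ≫ f.val = w ≫ g.val := by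
      have := types_congr_hom (congrArg (fun (n : equalizer yu yv ⟶ _) =>
        n.app (op e₀.unop.1)) (equalizer.condition yu yv)) s
      exact this
    have hmap : colimit.ι (lanDiag F (yoneda.obj e.1)) e₀ w =
        (coYonedaIso F).hom.app e.1 e.2 := by
      rw [← ht, ← hs]; exact (lanF_map F _ e₀ s).symm
    have hx : F.map w e₀.unop.2 = e.2 := by
      have := congrArg (lanDesc F e.1) hmap
      rwa [lanDesc_ι, lanDesc_coYoneda] at this
    refine ⟨e₀.unop, ⟨w, hx⟩, ?_⟩
    apply Subtype.ext
    exact hw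
  exact { nonempty := hne, cone_objs := cobjs, cone_maps := cmaps }

end Flatness

/-- Pointwise description of `lext H` evaluated at `d'`. -/
noncomputable def lextEvalIso (H : Dist C D) (d' : Dᵒᵖ) :
    lext H ⋙ (evaluation Dᵒᵖ (Type u)).obj d' ≅ lanF ((Functor.curry.obj H).obj d') := by
  haveI h0 : PreservesColimitsOfSize.{u, u} (lext H) :=
    preservesColimits_yoneda_lke (classify H)
  haveI := (yoneda_lke_facts (classify H)).2
  haveI : PreservesColimitsOfSize.{u, u} (lext H ⋙ (evaluation Dᵒᵖ (Type u)).obj d') :=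
    comp_preservesColimits _ _
  exact
    (uniqueExtAlongYoneda _ (lext H ⋙ (evaluation Dᵒᵖ (Type u)).obj d')
      (Functor.isoWhiskerRight (asIso (yoneda.leftKanExtensionUnit (classify H)))
        ((evaluation Dᵒᵖ (Type u)).obj d') : (Functor.curry.obj H).obj d' ≅ _)) ≪≫
    (lanFIso ((Functor.curry.obj H).obj d')).symm

/-- A distributor `H : C ⇸ D` is flat iff its cocontinuous extension
`lext_H : Psh(C) ⥤ Psh(D)` preserves finite limits. -/
theorem distFlat_iff_lext_preservesFiniteLimits {C D : Type u} [SmallCategory C]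
    [SmallCategory D] (H : Dist C D) :
    DistFlat H ↔ PreservesFiniteLimits (lext H) := by
  constructor
  · intro hF
    constructor
    intro J _ _
    apply preservesLimitsOfShape_of_evaluation
    intro d'
    haveI hc : IsCofiltered ((Functor.curry.obj H).obj d').Elements := hF d'.unop
    haveI := preservesFiniteLimits_lanF ((Functor.curry.obj H).obj d')
    haveI := preservesFiniteLimits_of_natIso (lextEvalIso H d').symm
    exact this.preservesFiniteLimits J
  · intro hL d
    haveI : PreservesFiniteLimits ((evaluation Dᵒᵖ (Type u)).obj (op d)) :=
      PreservesLimitsOfSize.preservesFiniteLimits.{0, 0} _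
    haveI h1 : PreservesFiniteLimits (lext H ⋙ (evaluation Dᵒᵖ (Type u)).obj (op d)) :=
      comp_preservesFiniteLimits _ _
    haveI h2 : PreservesFiniteLimits (lanF ((Functor.curry.obj H).obj (op d))) :=
      preservesFiniteLimits_of_natIso (lextEvalIso H (op d))
    exact isCofiltered_elements_of_preservesFiniteLimits _


end DistPaper
end

section
/- For a functor f : D → C and sites (C,J), (D,K): f is cover-lifting if and only if the corepresentable distributor C(f,1) : C ⇸ D, sending (d,c) to C(f d, c), is cover-distributing from J to K. -/
open CategoryTheory CategoryTheory.Limits Opposite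

universe u

namespace DistPaper

variable {B C D : Type u} [SmallCategory B] [SmallCategory C] [SmallCategory D]

/-- A functor `f : D ⥤ C` is cover-lifting iff the corepresentable distributor
`C(f, 1) : C ⇸ D`, `(d, c) ↦ C(f d, c)`, is cover-distributing from `J` to `K`. -/
theorem coverLifting_iff_corepresentable_coverDistributing {C D : Type u} [SmallCategory C]
    [SmallCategory D] (J : GrothendieckTopology C) (K : GrothendieckTopology D) (f : D ⥤ C) :
    f.IsCocontinuous K J ↔ CoverDistributing J K (f.op.prod (𝟭 C) ⋙ Functor.hom C) := by
  set H : Dist C D := f.op.prod (𝟭 C) ⋙ Functor.hom C with hH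
  have hmap_eq : ∀ {d d' : D} {c c' : C} (v : d' ⟶ d) (u : c ⟶ c')
      (x : H.obj (op d, c)), hmap H v u x = f.map v ≫ x ≫ u := by
    intro d d' c c' v u x
    rfl
  constructor
  · intro hf d c x S hS
    have h := f.cover_lift K J (J.pullback_stable x hS)
    have heq : pullDist H x S = (S.pullback x).functorPullback f := by
      ext d' v
      constructor
      · rintro ⟨c', u, x', hu, hx⟩
        simp only [hmap_eq, Category.comp_id, Category.id_comp] at hx
        have : (f.map v ≫ x : f.obj d' ⟶ c) = x' ≫ u := by
          have key : ∀ (y : f.obj d ⟶ c) (y' : f.obj d' ⟶ c'),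
              f.map v ≫ y ≫ 𝟙 c = f.map (𝟙 d') ≫ y' ≫ u → f.map v ≫ y = y' ≫ u := by
            intro y y' h; simpa using h
          exact key x x' hx
        show S (f.map v ≫ x)
        rw [this]
        exact S.downward_closed hu x'
      · intro hv
        refine ⟨f.obj d', f.map v ≫ x, 𝟙 _, hv, ?_⟩
        have key : ∀ (y : f.obj d ⟶ c),
            f.map v ≫ y ≫ 𝟙 c = f.map (𝟙 d') ≫ 𝟙 (f.obj d') ≫ f.map v ≫ y := by
          intro y; simp
        exact key x
    rw [heq]; exact h
  · intro hc
    constructor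
    intro d S hS
    have h := hc (𝟙 (f.obj d)) S hS
    have heq : pullDist H (𝟙 (f.obj d)) S = S.functorPullback f := by
      ext d' v
      constructor
      · rintro ⟨c', u, x', hu, hx⟩
        simp only [hmap_eq, Category.comp_id, Category.id_comp] at hx
        show S (f.map v)
        have : (f.map v : f.obj d' ⟶ f.obj d) = x' ≫ u := by
          have key : ∀ (y' : f.obj d' ⟶ c'),
              f.map v ≫ 𝟙 (f.obj d) ≫ 𝟙 (f.obj d) = f.map (𝟙 d') ≫ y' ≫ u → f.map v = y' ≫ u := by
            intro y' h; simpa using h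
          exact key x' hx
        rw [this]
        exact S.downward_closed hu x'
      · intro hv
        refine ⟨f.obj d', f.map v, 𝟙 _, hv, ?_⟩
        exact (by simp : f.map v ≫ 𝟙 (f.obj d) ≫ 𝟙 (f.obj d) = f.map (𝟙 d') ≫ 𝟙 (f.obj d') ≫ f.map v)
    rw [heq] at h; exact h

end DistPaper
end

section
/- A distributor of sites H : (C,J) ⇸ (D,K) induces a geometric surjection Sh(H) : Sh(D,K) → Sh(C,J) if and only if H is cover-testing: for any sieve S on an object c of C, if for every d and every x ∈ H(d,c) the sieve x^*H[S] is K-covering, then S is J-covering. -/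
open CategoryTheory CategoryTheory.Limits Opposite

universe u

namespace DistPaper

variable {B C D : Type u} [SmallCategory B] [SmallCategory C] [SmallCategory D]

/-! ### Auxiliary machinery -/

section Aux

open CategoryTheory.Limits

variable {C D : Type u} [SmallCategory C] [SmallCategory D]

section hmapLemmas

variable (H : Dist C D)

lemma hmap_v {d d' d'' : D} {c : C} (v : d' ⟶ d) (v' : d'' ⟶ d') (x : H.obj (op d, c)) :
    hmap H v' (𝟙 c) (hmap H v (𝟙 c) x) = hmap H (v' ≫ v) (𝟙 c) x := by
  rw [hmap_hmap]; simp

lemma hmap_h {d : D} {c c' c'' : C} (u : c ⟶ c') (u' : c' ⟶ c'') (x : H.obj (op d, c)) :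
    hmap H (𝟙 d) u' (hmap H (𝟙 d) u x) = hmap H (𝟙 d) (u ≫ u') x := by
  rw [hmap_hmap]; simp

lemma hmap_comm {d d' : D} {c c' : C} (v : d' ⟶ d) (u : c ⟶ c') (x : H.obj (op d, c)) :
    hmap H (𝟙 d') u (hmap H v (𝟙 c) x) = hmap H v (𝟙 c') (hmap H (𝟙 d) u x) := by
  rw [hmap_hmap, hmap_hmap]; simp

end hmapLemmas

variable (H : Dist C D)

/-- The pointwise left Kan extension, isomorphic to `lext H`. -/
noncomputable abbrev Lp : (Cᵒᵖ ⥤ Type u) ⥤ Dᵒᵖ ⥤ Type u :=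
  yoneda.pointwiseLeftKanExtension (classify H)

/-- `lext H` is isomorphic to the pointwise left Kan extension. -/
noncomputable def lextIso : lext H ≅ Lp H :=
  Functor.leftKanExtensionUnique _ (yoneda.leftKanExtensionUnit (classify H)) _
    (yoneda.pointwiseLeftKanExtensionUnit (classify H))

variable (P : Cᵒᵖ ⥤ Type u)

/-- The diagram whose colimit computes `(Lp H).obj P`. -/
noncomputable abbrev LpDiag : CostructuredArrow yoneda P ⥤ Dᵒᵖ ⥤ Type u :=
  CostructuredArrow.proj yoneda P ⋙ classify H

/-- Canonical elements of the Kan extension. -/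
noncomputable def elem {d : D} {c : C} (t : yoneda.obj c ⟶ P) (x : H.obj (op d, c)) :
    ((Lp H).obj P).obj (op d) :=
  (colimit.ι (LpDiag H P) (CostructuredArrow.mk t)).app (op d)
    (show ((LpDiag H P).obj (CostructuredArrow.mk t)).obj (op d) from x)

lemma elem_res {d d' : D} {c : C} (t : yoneda.obj c ⟶ P) (x : H.obj (op d, c)) (v : d' ⟶ d) :
    ((Lp H).obj P).map v.op (elem H P t x) = elem H P t (hmap H v (𝟙 c) x) :=
  (ConcreteCategory.congr_hom ((colimit.ι (LpDiag H P) (CostructuredArrow.mk t)).naturality v.op) x).symm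

lemma elem_comp {d : D} {c c' : C} (u : c ⟶ c') (t : yoneda.obj c' ⟶ P) (x : H.obj (op d, c)) :
    elem H P (yoneda.map u ≫ t) x = elem H P t (hmap H (𝟙 d) u x) := by
  have h := colimit.w (LpDiag H P)
    (CostructuredArrow.homMk u rfl :
      CostructuredArrow.mk (yoneda.map u ≫ t) ⟶ CostructuredArrow.mk t)
  exact (ConcreteCategory.congr_hom (congrArg (fun n => NatTrans.app n (op d)) h) x).symm

lemma elem_map {Q : Cᵒᵖ ⥤ Type u} (f : P ⟶ Q) {d : D} {c : C} (t : yoneda.obj c ⟶ P)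
    (x : H.obj (op d, c)) :
    ((Lp H).map f).app (op d) (elem H P t x) = elem H Q (t ≫ f) x := by
  have h : colimit.ι (LpDiag H P) (CostructuredArrow.mk t) ≫ (Lp H).map f =
      colimit.ι (LpDiag H Q) (CostructuredArrow.mk (t ≫ f)) := by
    simp only [Functor.pointwiseLeftKanExtension_map, colimit.ι_desc,
      CostructuredArrow.map_mk]
    exact colimit.ι_desc _ _
  exact ConcreteCategory.congr_hom (congrArg (fun n => NatTrans.app n (op d)) h) x

lemma elem_surj {d : D} (z : ((Lp H).obj P).obj (op d)) :
    ∃ (c : C) (t : yoneda.obj c ⟶ P) (x : H.obj (op d, c)), z = elem H P t x := by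
  obtain ⟨j, y, hy⟩ := Types.jointly_surjective'
    ((colimitObjIsoColimitCompEvaluation (LpDiag H P) (op d)).hom z)
  obtain ⟨c, ⟨⟨⟩⟩, t⟩ := j
  refine ⟨c, t, y, ?_⟩
  have h2 := ConcreteCategory.congr_hom (colimitObjIsoColimitCompEvaluation_ι_app_hom (LpDiag H P)
      (CostructuredArrow.mk t) (op d)) y
  dsimp at h2 hy
  apply (colimitObjIsoColimitCompEvaluation (LpDiag H P) (op d)).toEquiv.injective
  show (colimitObjIsoColimitCompEvaluation (LpDiag H P) (op d)).hom z =
    (colimitObjIsoColimitCompEvaluation (LpDiag H P) (op d)).hom (elem H P t y)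
  exact (h2.trans hy).symm

/-- The sieve of morphisms on which two canonical elements admit a common refinement. -/
def relSieve {d : D} {c₁ c₂ : C} (t₁ : yoneda.obj c₁ ⟶ P) (t₂ : yoneda.obj c₂ ⟶ P)
    (x₁ : H.obj (op d, c₁)) (x₂ : H.obj (op d, c₂)) : Sieve d where
  arrows d' v := ∃ (c₃ : C) (f₁ : c₃ ⟶ c₁) (f₂ : c₃ ⟶ c₂) (x₃ : H.obj (op d', c₃)),
    hmap H (𝟙 d') f₁ x₃ = hmap H v (𝟙 c₁) x₁ ∧ hmap H (𝟙 d') f₂ x₃ = hmap H v (𝟙 c₂) x₂ ∧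
    yoneda.map f₁ ≫ t₁ = yoneda.map f₂ ≫ t₂
  downward_closed := by
    rintro d' d'' v ⟨c₃, f₁, f₂, x₃, h₁, h₂, h₃⟩ w
    refine ⟨c₃, f₁, f₂, hmap H w (𝟙 c₃) x₃, ?_, ?_, h₃⟩
    · rw [hmap_comm, h₁, hmap_v]
    · rw [hmap_comm, h₂, hmap_v]

variable (K : GrothendieckTopology D)

lemma relSieve_trans (K : GrothendieckTopology D) (hfl : KFlat K H) {d : D} {c₁ c₂ c₃ : C}
    {t₁ : yoneda.obj c₁ ⟶ P} {t₂ : yoneda.obj c₂ ⟶ P} {t₃ : yoneda.obj c₃ ⟶ P}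
    {x₁ : H.obj (op d, c₁)} {x₂ : H.obj (op d, c₂)} {x₃ : H.obj (op d, c₃)}
    (h₁ : relSieve H P t₁ t₂ x₁ x₂ ∈ K d) (h₂ : relSieve H P t₂ t₃ x₂ x₃ ∈ K d) :
    relSieve H P t₁ t₃ x₁ x₃ ∈ K d := by
  refine K.transitive (K.intersection_covering h₁ h₂) _ ?_
  rintro d₁ v ⟨⟨a, p₁, p₂, y, hy₁, hy₂, hyt⟩, ⟨b, q₂, q₃, z, hz₂, hz₃, hzt⟩⟩
  refine K.transitive (hfl.spans y z) _ ?_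
  rintro d₂ w ⟨e, r₁, r₂, m, hm₁, hm₂⟩
  have heq : hmap H (𝟙 d₂) (r₁ ≫ p₂) m = hmap H (𝟙 d₂) (r₂ ≫ q₂) m := by
    calc hmap H (𝟙 d₂) (r₁ ≫ p₂) m
        = hmap H (𝟙 d₂) p₂ (hmap H (𝟙 d₂) r₁ m) := (hmap_h H r₁ p₂ m).symm
      _ = hmap H (𝟙 d₂) p₂ (hmap H w (𝟙 a) y) := by rw [hm₁]
      _ = hmap H w (𝟙 c₂) (hmap H (𝟙 d₁) p₂ y) := hmap_comm H w p₂ y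
      _ = hmap H w (𝟙 c₂) (hmap H v (𝟙 c₂) x₂) := by rw [hy₂]
      _ = hmap H w (𝟙 c₂) (hmap H (𝟙 d₁) q₂ z) := by rw [hz₂]
      _ = hmap H (𝟙 d₂) q₂ (hmap H w (𝟙 b) z) := (hmap_comm H w q₂ z).symm
      _ = hmap H (𝟙 d₂) q₂ (hmap H (𝟙 d₂) r₂ m) := by rw [hm₂]
      _ = hmap H (𝟙 d₂) (r₂ ≫ q₂) m := hmap_h H r₂ q₂ m
  refine K.superset_covering ?_ (hfl.equalizes _ _ m heq)
  rintro d₃ w' ⟨e₁, s, n, hs, hn⟩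
  simp only [Sieve.pullback_apply, ← Category.assoc]
  refine ⟨e₁, s ≫ r₁ ≫ p₁, s ≫ r₂ ≫ q₃, n, ?_, ?_, ?_⟩
  · calc hmap H (𝟙 d₃) (s ≫ r₁ ≫ p₁) n
        = hmap H (𝟙 d₃) (r₁ ≫ p₁) (hmap H (𝟙 d₃) s n) := (hmap_h H s (r₁ ≫ p₁) n).symm
      _ = hmap H (𝟙 d₃) (r₁ ≫ p₁) (hmap H w' (𝟙 e) m) := by rw [← hn]
      _ = hmap H (𝟙 d₃) p₁ (hmap H (𝟙 d₃) r₁ (hmap H w' (𝟙 e) m)) := by rw [hmap_h]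
      _ = hmap H (𝟙 d₃) p₁ (hmap H w' (𝟙 a) (hmap H (𝟙 d₂) r₁ m)) := by rw [hmap_comm]
      _ = hmap H (𝟙 d₃) p₁ (hmap H w' (𝟙 a) (hmap H w (𝟙 a) y)) := by rw [hm₁]
      _ = hmap H (𝟙 d₃) p₁ (hmap H (w' ≫ w) (𝟙 a) y) := by rw [hmap_v]
      _ = hmap H (w' ≫ w) (𝟙 c₁) (hmap H (𝟙 d₁) p₁ y) := hmap_comm H (w' ≫ w) p₁ y
      _ = hmap H (w' ≫ w) (𝟙 c₁) (hmap H v (𝟙 c₁) x₁) := by rw [hy₁]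
      _ = hmap H ((w' ≫ w) ≫ v) (𝟙 c₁) x₁ := hmap_v H v (w' ≫ w) x₁
  · calc hmap H (𝟙 d₃) (s ≫ r₂ ≫ q₃) n
        = hmap H (𝟙 d₃) (r₂ ≫ q₃) (hmap H (𝟙 d₃) s n) := (hmap_h H s (r₂ ≫ q₃) n).symm
      _ = hmap H (𝟙 d₃) (r₂ ≫ q₃) (hmap H w' (𝟙 e) m) := by rw [← hn]
      _ = hmap H (𝟙 d₃) q₃ (hmap H (𝟙 d₃) r₂ (hmap H w' (𝟙 e) m)) := by rw [hmap_h]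
      _ = hmap H (𝟙 d₃) q₃ (hmap H w' (𝟙 b) (hmap H (𝟙 d₂) r₂ m)) := by rw [hmap_comm]
      _ = hmap H (𝟙 d₃) q₃ (hmap H w' (𝟙 b) (hmap H w (𝟙 b) z)) := by rw [hm₂]
      _ = hmap H (𝟙 d₃) q₃ (hmap H (w' ≫ w) (𝟙 b) z) := by rw [hmap_v]
      _ = hmap H (w' ≫ w) (𝟙 c₃) (hmap H (𝟙 d₁) q₃ z) := hmap_comm H (w' ≫ w) q₃ z
      _ = hmap H (w' ≫ w) (𝟙 c₃) (hmap H v (𝟙 c₃) x₃) := by rw [hz₃]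
      _ = hmap H ((w' ≫ w) ≫ v) (𝟙 c₃) x₃ := hmap_v H v (w' ≫ w) x₃
  · simp only [Functor.map_comp, Category.assoc]
    rw [hyt, ← hzt]
    simpa only [Functor.map_comp, Category.assoc] using
      congrArg (fun (k : e₁ ⟶ c₂) => yoneda.map k ≫ t₂) hs


lemma locally_related (hfl : KFlat K H) {d : D} {c₁ c₂ : C} {t₁ : yoneda.obj c₁ ⟶ P}
    {t₂ : yoneda.obj c₂ ⟶ P} {x₁ : H.obj (op d, c₁)} {x₂ : H.obj (op d, c₂)}
    (h : elem H P t₁ x₁ = elem H P t₂ x₂) : relSieve H P t₁ t₂ x₁ x₂ ∈ K d := by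
  have h2 : colimit.ι (LpDiag H P ⋙ (evaluation Dᵒᵖ (Type u)).obj (op d))
      (CostructuredArrow.mk t₁) (show (LpDiag H P ⋙ (evaluation Dᵒᵖ (Type u)).obj (op d)).obj (CostructuredArrow.mk t₁) from x₁) =
      colimit.ι (LpDiag H P ⋙ (evaluation Dᵒᵖ (Type u)).obj (op d))
      (CostructuredArrow.mk t₂) (show (LpDiag H P ⋙ (evaluation Dᵒᵖ (Type u)).obj (op d)).obj (CostructuredArrow.mk t₂) from x₂) := by
    have e1 := ConcreteCategory.congr_hom (colimitObjIsoColimitCompEvaluation_ι_app_hom (LpDiag H P)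
      (CostructuredArrow.mk t₁) (op d)) x₁
    have e2 := ConcreteCategory.congr_hom (colimitObjIsoColimitCompEvaluation_ι_app_hom (LpDiag H P)
      (CostructuredArrow.mk t₂) (op d)) x₂
    rw [← e1, ← e2]
    exact congrArg _ h
  have hEq := Types.colimit_eq h2
  suffices h' : ∀ (p q : Σ (j : CostructuredArrow yoneda P),
      (LpDiag H P ⋙ (evaluation Dᵒᵖ (Type u)).obj (op d)).obj j),
      Relation.EqvGen (Functor.ColimitTypeRel (LpDiag H P ⋙ (evaluation Dᵒᵖ (Type u)).obj (op d))) p q →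
      relSieve H P p.1.hom q.1.hom (show H.obj (op d, p.1.left) from p.2)
        (show H.obj (op d, q.1.left) from q.2) ∈ K d by
    exact h' _ _ hEq
  intro p q hpq
  induction hpq with
  | rel p q hr =>
      obtain ⟨f, hf⟩ := hr
      refine K.superset_covering (fun d' v _ => ?_) (K.top_mem d)
      refine ⟨p.1.left, 𝟙 _, f.left, hmap H v (𝟙 _) (show H.obj (op d, p.1.left) from p.2),
        ?_, ?_, ?_⟩
      · rw [hmap_id]
      · exact (hmap_comm H v f.left _).trans (congrArg (hmap H v (𝟙 _))
          (show hmap H (𝟙 d) f.left (show H.obj (op d, p.1.left) from p.2) =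
            (show H.obj (op d, q.1.left) from q.2) from hf.symm))
      · rw [CategoryTheory.Functor.map_id, Category.id_comp]
        exact (CostructuredArrow.w f).symm
  | refl p =>
      refine K.superset_covering (fun d' v _ => ?_) (K.top_mem d)
      exact ⟨p.1.left, 𝟙 _, 𝟙 _, hmap H v (𝟙 _) (show H.obj (op d, p.1.left) from p.2), by rw [hmap_id], by rw [hmap_id], rfl⟩
  | symm p q hr ih =>
      refine K.superset_covering (fun d' v hv => ?_) ih
      obtain ⟨c₃, f₁, f₂, x₃, ha, hb, hc⟩ := hv
      exact ⟨c₃, f₂, f₁, x₃, hb, ha, hc.symm⟩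
  | trans p q r h1 h2 ih1 ih2 => exact relSieve_trans H P K hfl ih1 ih2

lemma pullDist_pullback (hfl : KFlat K H) {d : D} {c c'' : C} (u : c'' ⟶ c)
    (x'' : H.obj (op d, c'')) (S : Sieve c)
    (h : pullDist H (hmap H (𝟙 d) u x'') S ∈ K d) :
    pullDist H x'' (S.pullback u) ∈ K d := by
  refine K.transitive h _ ?_
  rintro d₁ v ⟨c₁, u₁, x₁, hu₁, hx₁⟩
  refine K.transitive (hfl.spans (hmap H v (𝟙 c'') x'') x₁) _ ?_
  rintro d₂ w ⟨c₂, p, q, z, hz₁, hz₂⟩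
  have heq : hmap H (𝟙 d₂) (p ≫ u) z = hmap H (𝟙 d₂) (q ≫ u₁) z := by
    calc hmap H (𝟙 d₂) (p ≫ u) z
        = hmap H (𝟙 d₂) u (hmap H (𝟙 d₂) p z) := (hmap_h H p u z).symm
      _ = hmap H (𝟙 d₂) u (hmap H w (𝟙 c'') (hmap H v (𝟙 c'') x'')) := by rw [hz₁]
      _ = hmap H (𝟙 d₂) u (hmap H (w ≫ v) (𝟙 c'') x'') := by rw [hmap_v]
      _ = hmap H (w ≫ v) (𝟙 c) (hmap H (𝟙 d) u x'') := hmap_comm H (w ≫ v) u x''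
      _ = hmap H w (𝟙 c) (hmap H v (𝟙 c) (hmap H (𝟙 d) u x'')) := (hmap_v H v w _).symm
      _ = hmap H w (𝟙 c) (hmap H (𝟙 d₁) u₁ x₁) := by rw [hx₁]
      _ = hmap H (𝟙 d₂) u₁ (hmap H w (𝟙 c₁) x₁) := (hmap_comm H w u₁ x₁).symm
      _ = hmap H (𝟙 d₂) u₁ (hmap H (𝟙 d₂) q z) := by rw [hz₂]
      _ = hmap H (𝟙 d₂) (q ≫ u₁) z := hmap_h H q u₁ z
  refine K.superset_covering ?_ (hfl.equalizes _ _ z heq)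
  rintro d₃ w' ⟨c₃, r, x₅, hr, hx₅⟩
  simp only [Sieve.pullback_apply, ← Category.assoc]
  refine ⟨c₃, r ≫ p, x₅, ?_, ?_⟩
  · show S ((r ≫ p) ≫ u)
    have hcomp : (r ≫ p) ≫ u = (r ≫ q) ≫ u₁ := by
      simpa only [Category.assoc] using hr
    rw [hcomp]
    exact S.downward_closed hu₁ _
  · calc hmap H ((w' ≫ w) ≫ v) (𝟙 c'') x''
        = hmap H (w' ≫ w) (𝟙 c'') (hmap H v (𝟙 c'') x'') := (hmap_v H v (w' ≫ w) x'').symm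
      _ = hmap H w' (𝟙 c'') (hmap H w (𝟙 c'') (hmap H v (𝟙 c'') x'')) := (hmap_v H w w' _).symm
      _ = hmap H w' (𝟙 c'') (hmap H (𝟙 d₂) p z) := by rw [hz₁]
      _ = hmap H (𝟙 d₃) p (hmap H w' (𝟙 c₂) z) := (hmap_comm H w' p z).symm
      _ = hmap H (𝟙 d₃) p (hmap H (𝟙 d₃) r x₅) := by rw [hx₅]
      _ = hmap H (𝟙 d₃) (r ≫ p) x₅ := hmap_h H r p x₅

lemma presheafToSheaf_map_eq_iff {X Y : Dᵒᵖ ⥤ Type u} (f g : X ⟶ Y) :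
    (presheafToSheaf K (Type u)).map f = (presheafToSheaf K (Type u)).map g ↔
      f ≫ toSheafify K Y = g ≫ toSheafify K Y := by
  have hf : f ≫ toSheafify K Y = toSheafify K X ≫
      (sheafToPresheaf K (Type u)).map ((presheafToSheaf K (Type u)).map f) := by
    simpa using (sheafificationAdjunction K (Type u)).unit.naturality f
  have hg : g ≫ toSheafify K Y = toSheafify K X ≫
      (sheafToPresheaf K (Type u)).map ((presheafToSheaf K (Type u)).map g) := by
    simpa using (sheafificationAdjunction K (Type u)).unit.naturality g
  constructor
  · intro h; rw [hf, hg, h]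
  · intro h
    apply ((sheafificationAdjunction K (Type u)).homEquiv X
      ((presheafToSheaf K (Type u)).obj Y)).injective
    rw [Adjunction.homEquiv_unit, Adjunction.homEquiv_unit]
    change toSheafify K X ≫ _ = toSheafify K X ≫ _
    rw [← hf, ← hg, h]

lemma presheafToSheaf_map_eq_of_locally_eq {X Y : Dᵒᵖ ⥤ Type u} (f g : X ⟶ Y)
    (h : ∀ (d : Dᵒᵖ) (z : X.obj d),
      Presheaf.equalizerSieve (F := Y) (f.app d z) (g.app d z) ∈ K d.unop) :
    (presheafToSheaf K (Type u)).map f = (presheafToSheaf K (Type u)).map g := by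
  rw [presheafToSheaf_map_eq_iff]
  have hsheaf : Presieve.IsSheaf K (sheafify K Y) :=
    (isSheaf_iff_isSheaf_of_type _ _).1 ((presheafToSheaf K (Type u)).obj Y).cond
  ext d z
  apply (hsheaf _ (h d z)).isSeparatedFor.ext
  intro d' w hw
  show (sheafify K Y).map w.op ((toSheafify K Y).app d (f.app d z)) =
    (sheafify K Y).map w.op ((toSheafify K Y).app d (g.app d z))
  rw [← NatTrans.naturality_apply (toSheafify K Y) w.op,
    ← NatTrans.naturality_apply (toSheafify K Y) w.op]
  exact congrArg ((toSheafify K Y).app (op d')) hw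

lemma locally_eq_of_presheafToSheaf_map_eq {X Y : Dᵒᵖ ⥤ Type u} (f g : X ⟶ Y)
    (h : (presheafToSheaf K (Type u)).map f = (presheafToSheaf K (Type u)).map g)
    (d : Dᵒᵖ) (z : X.obj d) :
    Presheaf.equalizerSieve (F := Y) (f.app d z) (g.app d z) ∈ K d.unop := by
  rw [presheafToSheaf_map_eq_iff] at h
  exact Presheaf.equalizerSieve_mem K (toSheafify K Y) _ _
    (ConcreteCategory.congr_hom (congrArg (fun n => NatTrans.app n d) h) z)

section Main

variable (J : GrothendieckTopology C)

/-- The classifying map of (the closure of pullbacks of) a sieve `S`. -/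
def phi0 {c : C} (S : Sieve c) : yoneda.obj c ⟶ (Functor.closedSieves J).toFunctor where
  app c' := ↾fun (u : c'.unop ⟶ c) => ⟨J.close (S.pullback u), J.close_isClosed _⟩
  naturality a b f := by
    ext (u : a.unop ⟶ c)
    apply Subtype.ext
    show J.close (S.pullback (f.unop ≫ u)) = (J.close (S.pullback u)).pullback f.unop
    rw [Sieve.pullback_comp, J.pullback_close]

/-- The classifying map of the maximal sieve. -/
def psi0 (c : C) : yoneda.obj c ⟶ (Functor.closedSieves J).toFunctor where
  app c' := ↾fun (_ : c'.unop ⟶ c) => ⟨(⊤ : Sieve c'.unop), by intro Y f _; trivial⟩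
  naturality a b f := by
    ext u
    apply Subtype.ext
    show (⊤ : Sieve b.unop) = (⊤ : Sieve a.unop).pullback f.unop
    rw [Sieve.pullback_top]

lemma phi0_eq_psi0_of_mem {c c₄ c'' : C} (S : Sieve c) (u : c'' ⟶ c) (u₂ : c₄ ⟶ c'')
    (hu₂ : S (u₂ ≫ u)) :
    yoneda.map u₂ ≫ yoneda.map u ≫ phi0 J S = yoneda.map u₂ ≫ yoneda.map u ≫ psi0 J c := by
  apply NatTrans.ext
  funext a
  ext (w₀ : a.unop ⟶ c₄)
  apply Subtype.ext
  dsimp [phi0, psi0]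
  show J.close (S.pullback ((w₀ ≫ u₂) ≫ u)) = ⊤
  have hmem : S ((w₀ ≫ u₂) ≫ u) := by
    rw [Category.assoc]
    exact S.downward_closed hu₂ w₀
  rw [(Sieve.mem_iff_pullback_eq_top _).1 hmem, J.close_eq_top_iff_mem]
  exact J.top_mem _

variable (K : GrothendieckTopology D)

lemma faithful_of_coverTesting (hfl : KFlat K H)
    (hct : ∀ ⦃c : C⦄ (S : Sieve c),
      (∀ ⦃d : D⦄ (x : H.obj (op d, c)), pullDist H x S ∈ K d) → S ∈ J c) :
    (sheafToPresheaf J (Type u) ⋙ Lp H ⋙ presheafToSheaf K (Type u)).Faithful := by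
  refine ⟨fun {F G} {φ ψ} h => ?_⟩
  have hmapEq : (presheafToSheaf K (Type u)).map ((Lp H).map φ.hom) =
      (presheafToSheaf K (Type u)).map ((Lp H).map ψ.hom) := h
  apply Sheaf.hom_ext
  apply NatTrans.ext
  funext cop
  obtain ⟨c⟩ := cop
  ext s
  have hEJ : Presheaf.equalizerSieve (F := G.val)
      (φ.hom.app (op c) s) (ψ.hom.app (op c) s) ∈ J c := by
    apply hct
    intro d x
    have hloc := locally_eq_of_presheafToSheaf_map_eq K _ _ hmapEq (op d)
      (elem H F.val (yonedaEquiv.symm s) x)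
    rw [elem_map, elem_map] at hloc
    refine K.transitive hloc _ ?_
    rintro d₁ v hv
    have hv' : elem H G.val (yonedaEquiv.symm s ≫ φ.hom) (hmap H v (𝟙 c) x) =
        elem H G.val (yonedaEquiv.symm s ≫ ψ.hom) (hmap H v (𝟙 c) x) := by
      rw [← elem_res, ← elem_res]
      exact hv
    refine K.transitive (locally_related H G.val K hfl hv') _ ?_
    rintro d₂ w ⟨c₃, f₁, f₂, x₃, h1, h2, h3⟩
    have heq3 : hmap H (𝟙 d₂) f₁ x₃ = hmap H (𝟙 d₂) f₂ x₃ := by rw [h1, h2]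
    refine K.superset_covering ?_ (hfl.equalizes _ _ x₃ heq3)
    rintro d₃ w' ⟨c₄, r, x₄, hr, hx₄⟩
    simp only [Sieve.pullback_apply, ← Category.assoc]
    refine ⟨c₄, r ≫ f₁, x₄, ?_, ?_⟩
    · show G.val.map (r ≫ f₁).op (φ.hom.app (op c) s) =
        G.val.map (r ≫ f₁).op (ψ.hom.app (op c) s)
      have y1 : yoneda.map (r ≫ f₁) ≫ (yonedaEquiv.symm s ≫ φ.hom) =
          yoneda.map (r ≫ f₂) ≫ (yonedaEquiv.symm s ≫ ψ.hom) := by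
        rw [Functor.map_comp, Functor.map_comp, Category.assoc, Category.assoc, h3]
      have e1 : G.val.map (r ≫ f₁).op (φ.hom.app (op c) s) =
          yonedaEquiv (yoneda.map (r ≫ f₁) ≫ (yonedaEquiv.symm s ≫ φ.hom)) := by
        rw [← yonedaEquiv_naturality, yonedaEquiv_comp, Equiv.apply_symm_apply]
      have e2 : G.val.map (r ≫ f₂).op (ψ.hom.app (op c) s) =
          yonedaEquiv (yoneda.map (r ≫ f₂) ≫ (yonedaEquiv.symm s ≫ ψ.hom)) := by
        rw [← yonedaEquiv_naturality, yonedaEquiv_comp, Equiv.apply_symm_apply]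
      calc G.val.map (r ≫ f₁).op (φ.hom.app (op c) s)
          = yonedaEquiv (yoneda.map (r ≫ f₁) ≫ (yonedaEquiv.symm s ≫ φ.hom)) := e1
        _ = yonedaEquiv (yoneda.map (r ≫ f₂) ≫ (yonedaEquiv.symm s ≫ ψ.hom)) :=
            congrArg _ y1
        _ = G.val.map (r ≫ f₂).op (ψ.hom.app (op c) s) := e2.symm
        _ = G.val.map (r ≫ f₁).op (ψ.hom.app (op c) s) := by rw [hr]
    · calc hmap H ((w' ≫ w) ≫ v) (𝟙 c) x
          = hmap H (w' ≫ w) (𝟙 c) (hmap H v (𝟙 c) x) := (hmap_v H v (w' ≫ w) x).symm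
        _ = hmap H w' (𝟙 c) (hmap H w (𝟙 c) (hmap H v (𝟙 c) x)) := (hmap_v H w w' _).symm
        _ = hmap H w' (𝟙 c) (hmap H (𝟙 d₂) f₁ x₃) := by rw [h1]
        _ = hmap H (𝟙 d₃) f₁ (hmap H w' (𝟙 c₃) x₃) := (hmap_comm H w' f₁ x₃).symm
        _ = hmap H (𝟙 d₃) f₁ (hmap H (𝟙 d₃) r x₄) := by rw [hx₄]
        _ = hmap H (𝟙 d₃) (r ≫ f₁) x₄ := hmap_h H r f₁ x₄
  have hsheaf : Presieve.IsSheaf J G.val := (isSheaf_iff_isSheaf_of_type _ _).1 G.cond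
  exact (hsheaf _ hEJ).isSeparatedFor.ext (fun c' f hf => hf)

lemma coverTesting_of_faithful (hfl : KFlat K H) (hcd : CoverDistributing J K H)
    (hfaith : (sheafToPresheaf J (Type u) ⋙ Lp H ⋙ presheafToSheaf K (Type u)).Faithful) :
    ∀ ⦃c : C⦄ (S : Sieve c),
      (∀ ⦃d : D⦄ (x : H.obj (op d, c)), pullDist H x S ∈ K d) → S ∈ J c := by
  intro c S hS
  have hΩsheaf : Presheaf.IsSheaf J (Functor.closedSieves J).toFunctor := by
    rw [isSheaf_iff_isSheaf_of_type]
    exact classifier_isSheaf J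
  let Ω : Sheaf J (Type u) := ⟨(Functor.closedSieves J).toFunctor, hΩsheaf⟩
  let F₀ : Sheaf J (Type u) := (presheafToSheaf J (Type u)).obj (yoneda.obj c)
  let φ : F₀ ⟶ Ω := ((sheafificationAdjunction J (Type u)).homEquiv _ Ω).symm (phi0 J S)
  let ψ : F₀ ⟶ Ω := ((sheafificationAdjunction J (Type u)).homEquiv _ Ω).symm (psi0 J c)
  have hunit_φ : toSheafify J (yoneda.obj c) ≫ φ.hom = phi0 J S := by
    have h0 := ((sheafificationAdjunction J (Type u)).homEquiv _ Ω).apply_symm_apply (phi0 J S)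
    rw [Adjunction.homEquiv_unit] at h0
    exact h0
  have hunit_ψ : toSheafify J (yoneda.obj c) ≫ ψ.hom = psi0 J c := by
    have h0 := ((sheafificationAdjunction J (Type u)).homEquiv _ Ω).apply_symm_apply (psi0 J c)
    rw [Adjunction.homEquiv_unit] at h0
    exact h0
  have hgφψ : (sheafToPresheaf J (Type u) ⋙ Lp H ⋙ presheafToSheaf K (Type u)).map φ =
      (sheafToPresheaf J (Type u) ⋙ Lp H ⋙ presheafToSheaf K (Type u)).map ψ := by
    show (presheafToSheaf K (Type u)).map ((Lp H).map φ.hom) =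
      (presheafToSheaf K (Type u)).map ((Lp H).map ψ.hom)
    apply presheafToSheaf_map_eq_of_locally_eq
    rintro ⟨d⟩ z
    obtain ⟨c', t, x, rfl⟩ := elem_surj H F₀.val z
    rw [elem_map, elem_map]
    have hR : Presheaf.imageSieve (toSheafify J (yoneda.obj c)) (yonedaEquiv t) ∈ J c' :=
      Presheaf.imageSieve_mem J (toSheafify J (yoneda.obj c)) (yonedaEquiv t)
    refine K.transitive (hcd x _ hR) _ ?_
    rintro d₁ v ⟨c'', w, x'', hw, hx''⟩
    obtain ⟨u, hu⟩ := hw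
    have htw : yoneda.map w ≫ t = yoneda.map u ≫ toSheafify J (yoneda.obj c) := by
      apply yonedaEquiv.injective
      rw [← yonedaEquiv_naturality, yonedaEquiv_comp, yonedaEquiv_yoneda_map]
      exact hu.symm
    have res1 : ((Lp H).obj Ω.val).map v.op (elem H Ω.val (t ≫ φ.hom) x) =
        elem H Ω.val (yoneda.map u ≫ phi0 J S) x'' := by
      rw [elem_res, hx'', ← elem_comp]
      congr 1
      rw [← Category.assoc, htw, Category.assoc, hunit_φ]
    have res2 : ((Lp H).obj Ω.val).map v.op (elem H Ω.val (t ≫ ψ.hom) x) =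
        elem H Ω.val (yoneda.map u ≫ psi0 J c) x'' := by
      rw [elem_res, hx'', ← elem_comp]
      congr 1
      rw [← Category.assoc, htw, Category.assoc, hunit_ψ]
    refine K.superset_covering ?_
      (pullDist_pullback H K hfl u x'' S (hS (hmap H (𝟙 d₁) u x'')))
    rintro d₂ v' ⟨c₄, u₂, x₄, hu₂, hx₄⟩
    show ((Lp H).obj Ω.val).map (v' ≫ v).op (elem H Ω.val (t ≫ φ.hom) x) =
      ((Lp H).obj Ω.val).map (v' ≫ v).op (elem H Ω.val (t ≫ ψ.hom) x)
    have hsplit : ∀ (z : ((Lp H).obj Ω.val).obj (op d)),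
        ((Lp H).obj Ω.val).map (v' ≫ v).op z =
        ((Lp H).obj Ω.val).map v'.op (((Lp H).obj Ω.val).map v.op z) := by
      intro z
      rw [op_comp, FunctorToTypes.map_comp_apply]
    rw [hsplit, hsplit, res1, res2, elem_res, elem_res, hx₄, ← elem_comp, ← elem_comp,
      phi0_eq_psi0_of_mem J S u u₂ hu₂]
  have hφψ : φ = ψ := hfaith.map_injective hgφψ
  have hφψ₀ : phi0 J S = psi0 J c := by
    rw [← hunit_φ, ← hunit_ψ, hφψ]
  have happ := ConcreteCategory.congr_hom (congrArg (fun n => NatTrans.app n (op c)) hφψ₀) (𝟙 c)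
  have hclose : J.close (S.pullback (𝟙 c)) = ⊤ := congrArg Subtype.val happ
  rw [Sieve.pullback_id] at hclose
  exact (J.close_eq_top_iff_mem S).1 hclose

end Main

end Aux
/-- A distributor of sites `H : (C,J) ⇸ (D,K)` induces a geometric surjection
`Sh(H) : Sh(D,K) → Sh(C,J)` (i.e. the inverse image `a_K ∘ lext_H ∘ i_J` is faithful)
iff `H` is cover-testing. -/
theorem geometric_surjection_iff_coverTesting {C D : Type u} [SmallCategory C]
    [SmallCategory D] (J : GrothendieckTopology C) (K : GrothendieckTopology D)
    (H : Dist C D) (hfl : KFlat K H) (hcd : CoverDistributing J K H) :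
    (sheafToPresheaf J (Type u) ⋙ lext H ⋙ presheafToSheaf K (Type u)).Faithful ↔
      ∀ ⦃c : C⦄ (S : Sieve c),
        (∀ ⦃d : D⦄ (x : H.obj (op d, c)), pullDist H x S ∈ K d) → S ∈ J c := by
  have hiso : (sheafToPresheaf J (Type u) ⋙ lext H ⋙ presheafToSheaf K (Type u)) ≅
      (sheafToPresheaf J (Type u) ⋙ Lp H ⋙ presheafToSheaf K (Type u)) :=
    Functor.isoWhiskerLeft _ (Functor.isoWhiskerRight (lextIso H) _)
  constructor
  · intro hf
    exact coverTesting_of_faithful H J K hfl hcd (Functor.Faithful.of_iso (F := _) hiso)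
  · intro hct
    have := faithful_of_coverTesting H J K hfl hct
    exact Functor.Faithful.of_iso hiso.symm

end DistPaper
end
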